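/- Let A be a bounded archimedean ℓ-algebra, let Y_A be the space of bal-morphisms A → ℝ topologized as a subspace of ℝ^A, let B(Y_A) be the ℓ-algebra of all bounded real-valued functions on Y_A with pointwise operations and order (which is a basic algebra), and let e : A → B(Y_A) be given by e(a)(α) = α(a). Then for every basic algebra C and every bal-morphism α : A → C, there is a unique normal homomorphism γ : B(Y_A) → C with γ ∘ e = α. Consequently, the basic algebras with normal homomorphisms form a (non-full) reflective subcategory of the bounded archimedean ℓ-algebras, with reflector the canonical extension A ↦ B(Y_A). -/

import Mathlib

/-- An ℓ-algebra: a commutative unital ℝ-algebra with a lattice order such that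
addition is translation-invariant, products of nonnegatives are nonnegative, and
scalar multiplication by nonnegative reals preserves nonnegativity. -/
class LAlg (A : Type*) extends CommRing A, Lattice A, Algebra ℝ A where
  add_le_add_right' : ∀ a b : A, a ≤ b → ∀ c : A, a + c ≤ b + c
  mul_nonneg' : ∀ a b : A, 0 ≤ a → 0 ≤ b → 0 ≤ a * b
  smul_nonneg' : ∀ (r : ℝ) (a : A), 0 ≤ r → 0 ≤ a → 0 ≤ r • a

/-- `A` is bounded: `1` is a strong order unit. -/
def LAlg.IsBounded (A : Type*) [LAlg A] : Prop := ∀ a : A, ∃ n : ℕ, a ≤ n • (1 : A)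

/-- `A` is archimedean. -/
def LAlg.IsArch (A : Type*) [LAlg A] : Prop := ∀ a b : A, (∀ n : ℕ, n • a ≤ b) → a ≤ 0

/-- The norm ‖a‖ = inf {r : ℝ | |a| ≤ r·1}, where |a| = a ⊔ -a. -/
noncomputable def lnorm {A : Type*} [LAlg A] (a : A) : ℝ := sInf {r : ℝ | a ⊔ -a ≤ r • (1 : A)}

/-- A bal-morphism: a unital ℝ-algebra homomorphism preserving binary joins. -/
def IsBalHom {A B : Type*} [LAlg A] [LAlg B] (α : A →ₐ[ℝ] B) : Prop :=
  ∀ a b : A, α (a ⊔ b) = α a ⊔ α b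

/-- ℝ is a bounded archimedean ℓ-algebra. -/
noncomputable instance : LAlg ℝ :=
  { (inferInstance : CommRing ℝ), (inferInstance : Lattice ℝ),
    (inferInstance : Algebra ℝ ℝ) with
    add_le_add_right' := fun _ _ h c => add_le_add h le_rfl
    mul_nonneg' := fun _ _ => mul_nonneg
    smul_nonneg' := fun _ _ => smul_nonneg }

/-- The Yosida space of A, realized as the set of bal-morphisms A → ℝ. -/
def YosidaSpace (A : Type*) [LAlg A] : Type _ :=
  {α : A →ₐ[ℝ] ℝ // IsBalHom α}

/-- The Yosida space is topologized as a subspace of ℝ^A with the product topology. -/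
noncomputable instance (A : Type*) [LAlg A] : TopologicalSpace (YosidaSpace A) :=
  TopologicalSpace.induced (fun (α : YosidaSpace A) (a : A) => α.1 a) inferInstance


/-- Dedekind completeness: every nonempty subset bounded above has a supremum. -/
def DedekindComplete (C : Type*) [LAlg C] : Prop :=
  ∀ S : Set C, S.Nonempty → BddAbove S → ∃ c : C, IsLUB S c

/-- `a` is an atom of the boolean algebra of idempotents (where `f ≤ e` iff `f * e = f`). -/
def IsIdemAtom {C : Type*} [LAlg C] (a : C) : Prop :=
  a * a = a ∧ a ≠ 0 ∧ ∀ f : C, f * f = f → f * a = f → f = 0 ∨ f = a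

/-- The boolean algebra of idempotents of `C` is atomic. -/
def IdemAtomic (C : Type*) [LAlg C] : Prop :=
  ∀ e : C, e * e = e → e ≠ 0 → ∃ a : C, IsIdemAtom a ∧ a * e = a

/-- A basic algebra: a Dedekind complete bounded archimedean ℓ-algebra whose boolean
algebra of idempotents is atomic. -/
def IsBasic (C : Type*) [LAlg C] : Prop :=
  LAlg.IsBounded C ∧ LAlg.IsArch C ∧ DedekindComplete C ∧ IdemAtomic C

/-- A normal homomorphism: a bal-morphism preserving all existing suprema and infima. -/
def IsNormal {A B : Type*} [LAlg A] [LAlg B] (γ : A →ₐ[ℝ] B) : Prop :=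
  IsBalHom γ ∧
  (∀ (S : Set A) (a : A), IsLUB S a → IsLUB (γ '' S) (γ a)) ∧
  (∀ (S : Set A) (a : A), IsGLB S a → IsGLB (γ '' S) (γ a))

/-- The ℝ-subalgebra of all bounded real-valued functions on a set `Y`, inside the
ℓ-algebra of all functions `Y → ℝ` with pointwise operations and order. -/
def BddFuns (Y : Type*) : Subalgebra ℝ (Y → ℝ) where
  carrier := {g : Y → ℝ | ∃ r : ℝ, ∀ y, |g y| ≤ r}
  one_mem' := ⟨1, fun y => by simp⟩
  zero_mem' := ⟨0, fun y => by simp⟩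
  add_mem' := by
    rintro a b ⟨r, hr⟩ ⟨s, hs⟩
    exact ⟨r + s, fun y => (abs_add_le _ _).trans (add_le_add (hr y) (hs y))⟩
  mul_mem' := by
    rintro a b ⟨r, hr⟩ ⟨s, hs⟩
    refine ⟨max r 0 * max s 0, fun y => ?_⟩
    rw [Pi.mul_apply, abs_mul]
    exact mul_le_mul ((hr y).trans (le_max_left _ _)) ((hs y).trans (le_max_left _ _))
      (abs_nonneg _) (le_max_right _ _)
  algebraMap_mem' := fun r => ⟨|r|, fun y => by simp [Pi.algebraMap_apply]⟩

/-- `B(Y)` is a sublattice of `Y → ℝ` (pointwise order). -/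
noncomputable instance (Y : Type*) : Lattice (BddFuns Y) :=
  Subtype.lattice
    (fun a b ha hb => by
      obtain ⟨r, hr⟩ := ha; obtain ⟨s, hs⟩ := hb
      refine ⟨max r s, fun y => ?_⟩
      have : (a ⊔ b) y = a y ⊔ b y := rfl
      rw [this]
      rcases le_total (a y) (b y) with h | h
      · rw [sup_eq_right.mpr h]; exact (hs y).trans (le_max_right _ _)
      · rw [sup_eq_left.mpr h]; exact (hr y).trans (le_max_left _ _))
    (fun a b ha hb => by
      obtain ⟨r, hr⟩ := ha; obtain ⟨s, hs⟩ := hb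
      refine ⟨max r s, fun y => ?_⟩
      have : (a ⊓ b) y = a y ⊓ b y := rfl
      rw [this]
      rcases le_total (a y) (b y) with h | h
      · rw [inf_eq_left.mpr h]; exact (hr y).trans (le_max_left _ _)
      · rw [inf_eq_right.mpr h]; exact (hs y).trans (le_max_right _ _))

/-- `B(Y)` is an ℓ-algebra with pointwise operations and order. -/
noncomputable instance (Y : Type*) : LAlg (BddFuns Y) :=
  { (inferInstance : CommRing (BddFuns Y)), (inferInstance : Lattice (BddFuns Y)),
    (inferInstance : Algebra ℝ (BddFuns Y)) with
    add_le_add_right' := by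
      intro a b h c
      intro y
      exact add_le_add (h y) le_rfl
    mul_nonneg' := by
      intro a b ha hb
      intro y
      exact mul_nonneg (ha y) (hb y)
    smul_nonneg' := by
      intro r a hr ha
      intro y
      exact smul_nonneg hr (ha y) }

/-- The canonical extension map e : A → B(Y_A), e(a)(α) = α(a). -/
noncomputable def eMap (A : Type) [LAlg A] (hb : LAlg.IsBounded A) :
    A → BddFuns (YosidaSpace A) :=
  fun a => ⟨fun α => α.1 a, by
    obtain ⟨n, hn⟩ := hb a
    obtain ⟨m, hm⟩ := hb (-a)
    have mono : ∀ (α : YosidaSpace A) (x y : A), x ≤ y → α.1 x ≤ α.1 y := by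
      intro α x y hxy
      have h := α.2 x y
      rw [sup_eq_right.mpr hxy] at h
      exact sup_eq_right.mp h.symm
    refine ⟨max n m, fun α => abs_le.mpr ⟨?_, ?_⟩⟩
    · have := mono α _ _ hm
      rw [map_neg, map_nsmul, map_one, nsmul_eq_mul, mul_one] at this
      linarith [le_max_right (n : ℝ) m]
    · have := mono α _ _ hn
      rw [map_nsmul, map_one, nsmul_eq_mul, mul_one] at this
      exact this.trans (le_max_left _ _)⟩
/-!
In a basic algebra `C`, the band of an atom `a` of the idempotents is a totally ordered
archimedean copy of `ℝ`, so `c * a = χₐ(c) • a` for a bal-morphism `χₐ : C → ℝ`. Supports of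
positive elements and atomicity make the atoms detect the order, and Dedekind completeness
realizes every bounded family of coordinates, so `c ↦ (χₐ(c))ₐ` is an order- and
algebra-isomorphism of `C` onto the bounded functions on its atoms. Each atom gives the point
`χₐ ∘ α` of `Y_A`; precomposition with this map of atoms to `Y_A`, transported back to `C`, is the
normal extension of `α`. For uniqueness, `χₐ ∘ γ` is a supremum-preserving character of `B(Y_A)`;
as `1` is the supremum of the point indicators, it is the evaluation at a point, and `γ ∘ e = α`
forces that point to be `χₐ ∘ α`.
-/

section LatticeOrderedGroup

variable {G : Type*} [Lattice G] [AddCommGroup G] [IsOrderedAddMonoid G]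

theorem add_inf_le_inf_add_inf {a b c : G} (ha : 0 ≤ a) (hb : 0 ≤ b) (hc : 0 ≤ c) :
    (a + b) ⊓ c ≤ a ⊓ c + b ⊓ c := by
  rw [inf_add, add_inf, add_inf]
  exact le_inf (le_inf inf_le_left (inf_le_right.trans (le_add_of_nonneg_left ha)))
    (le_inf (inf_le_right.trans (le_add_of_nonneg_right hb))
      (inf_le_right.trans (le_add_of_nonneg_left hc)))

theorem nsmul_inf_eq_zero {a b : G} (ha : 0 ≤ a) (hb : 0 ≤ b) (h : a ⊓ b = 0) (n : ℕ) :
    n • a ⊓ b = 0 := by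
  induction n with
  | zero => simpa using hb
  | succ n ih =>
    refine le_antisymm ?_ (le_inf (nsmul_nonneg ha _) hb)
    calc (n + 1) • a ⊓ b ≤ n • a ⊓ b + a ⊓ b :=
          succ_nsmul a n ▸ add_inf_le_inf_add_inf (nsmul_nonneg ha n) ha hb
      _ = 0 := by rw [ih, h, add_zero]

theorem IsLUB.inf_le_of_forall_inf_le {S : Set G} {u x w : G} (hu : IsLUB S u)
    (h : ∀ s ∈ S, s ⊓ x ≤ w) : u ⊓ x ≤ w := by
  have hinf : ∀ p : G, p ⊓ x = p + x - p ⊔ x := fun p => eq_sub_of_add_eq (inf_add_sup p x)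
  rw [hinf, sub_le_iff_le_add, ← le_sub_iff_add_le]
  refine hu.2 fun s hs => le_sub_iff_add_le.2 ?_
  calc s + x ≤ w + s ⊔ x := sub_le_iff_le_add.1 (hinf s ▸ h s hs)
    _ ≤ w + u ⊔ x := by gcongr; exact hu.1 hs

end LatticeOrderedGroup

namespace LAlg

variable {C : Type*} [LAlg C]

instance (priority := 100) toIsOrderedAddMonoid : IsOrderedAddMonoid C where
  add_le_add_left := LAlg.add_le_add_right'

instance (priority := 100) toPosMulMono : PosMulMono C where
  mul_le_mul_of_nonneg_left a ha b c hbc := by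
    simpa [mul_sub] using LAlg.mul_nonneg' a (c - b) ha (sub_nonneg.2 hbc)

instance (priority := 100) toMulPosMono : MulPosMono C := PosMulMono.toMulPosMono

instance (priority := 100) toPosSMulMono : PosSMulMono ℝ C where
  smul_le_smul_of_nonneg_left r hr a b hab := by
    simpa [smul_sub] using LAlg.smul_nonneg' r (b - a) hr (sub_nonneg.2 hab)

instance (priority := 100) toPosSMulStrictMono : PosSMulStrictMono ℝ C :=
  PosSMulMono.toPosSMulStrictMono

theorem mul_eq_zero_of_inf_eq_zero (hbd : IsBounded C) {a b : C} (ha : 0 ≤ a) (hb : 0 ≤ b)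
    (h : a ⊓ b = 0) : a * b = 0 := by
  obtain ⟨n, hn⟩ := hbd a
  obtain ⟨m, hm⟩ := hbd b
  refine le_antisymm ?_ (mul_nonneg ha hb)
  have hdisj : a ⊓ n • b = 0 := by rw [inf_comm, nsmul_inf_eq_zero hb ha (by rwa [inf_comm])]
  calc a * b ≤ m • a ⊓ n • b := le_inf
        (by simpa [mul_comm] using mul_le_mul_of_nonneg_left hm ha)
        (by simpa using mul_le_mul_of_nonneg_right hn hb)
    _ = 0 := nsmul_inf_eq_zero ha (nsmul_nonneg hb n) hdisj m

protected theorem mul_self_nonneg (hbd : IsBounded C) (a : C) : 0 ≤ a * a := by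
  have hcross : a⁺ * a⁻ = 0 := mul_eq_zero_of_inf_eq_zero hbd (posPart_nonneg a)
    (negPart_nonneg a) (posPart_inf_negPart_eq_zero a)
  have : a * a = a⁺ * a⁺ + a⁻ * a⁻ := by
    conv_lhs => rw [← posPart_sub_negPart a]
    linear_combination (-2 : C) * hcross
  rw [this]
  exact add_nonneg (mul_nonneg (posPart_nonneg a) (posPart_nonneg a))
    (mul_nonneg (negPart_nonneg a) (negPart_nonneg a))

protected theorem zero_le_one (hbd : IsBounded C) : (0 : C) ≤ 1 := by
  simpa using LAlg.mul_self_nonneg hbd (1 : C)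

theorem eq_zero_of_mul_self_eq_zero (hbd : IsBounded C) (harch : IsArch C) {t : C}
    (h : t * t = 0) : t = 0 := by
  have nonpos : ∀ t : C, t * t = 0 → t ≤ 0 := by
    intro t h
    -- `0 ≤ (n t - 1)² = 1 - 2 n t` bounds every multiple of `2 t` by `1`.
    have h2 : 2 • t ≤ 0 := harch _ 1 fun n => by
      have hsq : (n • t - 1) * (n • t - 1) = 1 - n • 2 • t := by
        simp only [nsmul_eq_mul]
        linear_combination (n : C) ^ 2 * h
      exact sub_nonneg.1 (hsq ▸ LAlg.mul_self_nonneg hbd (n • t - 1))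
    have : (2 : ℝ) • t ≤ (2 : ℝ) • 0 := by rwa [smul_zero, ofNat_smul_eq_nsmul]
    exact le_of_smul_le_smul_left this two_pos
  exact le_antisymm (nonpos t h) (neg_nonpos.1 (nonpos (-t) (by rwa [neg_mul_neg])))

theorem inf_eq_zero_of_mul_eq_zero (hbd : IsBounded C) (harch : IsArch C) {a b : C}
    (ha : 0 ≤ a) (hb : 0 ≤ b) (h : a * b = 0) : a ⊓ b = 0 := by
  have ht : 0 ≤ a ⊓ b := le_inf ha hb
  refine eq_zero_of_mul_self_eq_zero hbd harch (le_antisymm ?_ (mul_nonneg ht ht))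
  calc (a ⊓ b) * (a ⊓ b) ≤ a * b := mul_le_mul inf_le_left inf_le_right ht ha
    _ = 0 := h

theorem le_zero_of_forall_le_smul_one (harch : IsArch C) {x : C}
    (h : ∀ ε : ℝ, 0 < ε → x ≤ ε • (1 : C)) : x ≤ 0 := by
  refine harch x (1 ⊔ 0) fun n => ?_
  rcases n.eq_zero_or_pos with rfl | hn
  · simp
  · have hn' : (0 : ℝ) < n := Nat.cast_pos.2 hn
    calc n • x = (n : ℝ) • x := (Nat.cast_smul_eq_nsmul ℝ n x).symm
      _ ≤ (n : ℝ) • ((n : ℝ)⁻¹ • (1 : C)) :=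
          smul_le_smul_of_nonneg_left (h _ (inv_pos.2 hn')) hn'.le
      _ = 1 := by rw [smul_inv_smul₀ hn'.ne']
      _ ≤ 1 ⊔ 0 := le_sup_left

/-- The support of `d`, obtained as the supremum of the `n • d ⊓ 1`. -/
theorem exists_support_idempotent (hbd : IsBounded C) (harch : IsArch C)
    (hdc : DedekindComplete C) {d : C} (hd : 0 ≤ d) :
    ∃ e : C, IsIdempotentElem e ∧ d * e = d ∧ ∀ x : C, 0 ≤ x → x ⊓ d = 0 → x * e = 0 := by
  obtain ⟨e, he⟩ := hdc (Set.range fun n : ℕ => n • d ⊓ 1) ⟨_, 0, rfl⟩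
    ⟨1, by rintro _ ⟨n, rfl⟩; exact inf_le_right⟩
  have he0 : 0 ≤ e := (le_inf (by simp) (LAlg.zero_le_one hbd) : (0 : C) ≤ 0 • d ⊓ 1).trans
    (he.1 ⟨0, rfl⟩)
  have he1 : e ≤ 1 := he.2 (by rintro _ ⟨n, rfl⟩; exact inf_le_right)
  have perp : ∀ x : C, 0 ≤ x → x ⊓ d = 0 → x * e = 0 := by
    intro x hx hxd
    have hex : e ⊓ x = 0 := by
      refine le_antisymm (he.inf_le_of_forall_inf_le ?_) (le_inf he0 hx)
      rintro _ ⟨n, rfl⟩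
      calc n • d ⊓ 1 ⊓ x ≤ n • d ⊓ x := inf_le_inf_right x inf_le_left
        _ = 0 := nsmul_inf_eq_zero hd hx (by rwa [inf_comm]) n
    rw [mul_comm]
    exact mul_eq_zero_of_inf_eq_zero hbd he0 hx hex
  have hd1e : d ⊓ (1 - e) = 0 := by
    refine le_antisymm (harch _ 1 fun n => ?_) (le_inf hd (sub_nonneg.2 he1))
    induction n with
    | zero => simpa using LAlg.zero_le_one hbd
    | succ n ih =>
      have hle : n • (d ⊓ (1 - e)) ≤ e :=
        (le_inf (nsmul_le_nsmul_right inf_le_left n) ih).trans (he.1 ⟨n, rfl⟩)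
      calc (n + 1) • (d ⊓ (1 - e)) = n • (d ⊓ (1 - e)) + d ⊓ (1 - e) := succ_nsmul _ n
        _ ≤ e + (1 - e) := add_le_add hle inf_le_right
        _ = 1 := add_sub_cancel e 1
  have hde : d * (1 - e) = 0 := mul_eq_zero_of_inf_eq_zero hbd hd (sub_nonneg.2 he1) hd1e
  have hee : (1 - e) * e = 0 := perp _ (sub_nonneg.2 he1) (by rwa [inf_comm])
  refine ⟨e, ?_, ?_, perp⟩
  · simpa [IsIdempotentElem, sub_mul, sub_eq_zero, eq_comm] using hee
  · simpa [mul_sub, sub_eq_zero, eq_comm] using hde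

theorem posPart_mul_eq_zero {w b : C} (hb0 : 0 ≤ b) (hb1 : b ≤ 1) (h : w * b = 0) :
    w⁺ * b = 0 := by
  have heq : w⁺ * b = w⁻ * b := by
    rw [← sub_eq_zero, ← sub_mul, posPart_sub_negPart, h]
  have hle : ∀ p : C, 0 ≤ p → p * b ≤ p := fun p hp => by
    simpa using mul_le_mul_of_nonneg_left hb1 hp
  refine le_antisymm ?_ (mul_nonneg (posPart_nonneg w) hb0)
  calc w⁺ * b ≤ w⁺ ⊓ w⁻ := le_inf (hle _ (posPart_nonneg w)) (heq ▸ hle _ (negPart_nonneg w))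
    _ = 0 := posPart_inf_negPart_eq_zero w

end LAlg

namespace IsIdempotentElem

variable {C : Type*} [LAlg C]

theorem nonneg (hbd : LAlg.IsBounded C) {e : C} (he : IsIdempotentElem e) : 0 ≤ e :=
  he ▸ LAlg.mul_self_nonneg hbd e

theorem le_one (hbd : LAlg.IsBounded C) {e : C} (he : IsIdempotentElem e) : e ≤ 1 :=
  sub_nonneg.1 (he.one_sub.nonneg hbd)

end IsIdempotentElem

namespace IsIdemAtom

open LAlg

variable {C : Type*} [LAlg C]

theorem isIdempotentElem {a : C} (ha : IsIdemAtom a) : IsIdempotentElem a := ha.1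

theorem pos (hbd : LAlg.IsBounded C) {a : C} (ha : IsIdemAtom a) : 0 < a :=
  (ha.isIdempotentElem.nonneg hbd).lt_of_ne' ha.2.1

theorem le_one (hbd : LAlg.IsBounded C) {a : C} (ha : IsIdemAtom a) : a ≤ 1 :=
  ha.isIdempotentElem.le_one hbd

theorem mul_eq_zero_of_ne {a b : C} (ha : IsIdemAtom a) (hb : IsIdemAtom b)
    (hab : a ≠ b) : a * b = 0 := by
  have hidem : IsIdempotentElem (a * b) := ha.isIdempotentElem.mul hb.isIdempotentElem
  rcases ha.2.2 _ hidem (by rw [mul_right_comm, ha.1]) with h | ha'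
  · exact h
  rcases hb.2.2 _ hidem (by rw [mul_assoc, hb.1]) with h | hb'
  · exact h
  · exact absurd (ha'.symm.trans hb') hab

theorem nonneg_or_nonpos (hbd : LAlg.IsBounded C) (harch : LAlg.IsArch C)
    (hdc : DedekindComplete C) {a w : C} (ha : IsIdemAtom a) (hw : w * a = w) :
    0 ≤ w ∨ w ≤ 0 := by
  have h1a : w * (1 - a) = 0 := by rw [mul_sub, mul_one, hw, sub_self]
  have ha0 : 0 ≤ 1 - a := sub_nonneg.2 (ha.le_one hbd)
  have ha1 : 1 - a ≤ 1 := sub_le_self 1 ((ha.pos hbd).le)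
  have hpos : w⁺ * a = w⁺ := by
    have := posPart_mul_eq_zero ha0 ha1 h1a
    rwa [mul_sub, mul_one, sub_eq_zero, eq_comm] at this
  have hneg : w⁻ * a = w⁻ := by
    have := posPart_mul_eq_zero ha0 ha1 (by rw [neg_mul, h1a, neg_zero] : -w * (1 - a) = 0)
    rwa [posPart_neg, mul_sub, mul_one, sub_eq_zero, eq_comm] at this
  -- With `e` the support of `w⁺`, the idempotent `e * a` below the atom `a` is `0` or `a`.
  obtain ⟨e, he, hwe, perp⟩ := exists_support_idempotent hbd harch hdc (posPart_nonneg w)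
  rcases ha.2.2 (e * a) (he.mul ha.isIdempotentElem) (by rw [mul_assoc, ha.1]) with hea | hea
  · right
    rw [← posPart_eq_zero, ← hwe, ← hpos, mul_assoc, mul_comm a, hea, mul_zero]
  · left
    have : w⁻ * e = 0 :=
      perp _ (negPart_nonneg w) (by rw [inf_comm, posPart_inf_negPart_eq_zero])
    rw [← negPart_eq_zero, ← hneg, ← hea, ← mul_assoc, this, zero_mul]

end IsIdemAtom

namespace LAlg

variable {C : Type*} [LAlg C]

/-- For an atom `a` of a basic algebra, the scalar `r` with `c * a = r • a`
(`mul_eq_atomCoord_smul`). -/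
noncomputable def atomCoord (a c : C) : ℝ := sSup {r : ℝ | r • a ≤ c * a}

theorem atomCoord_eq_of_mul_eq {a c : C} {r : ℝ} (ha : 0 < a) (h : c * a = r • a) :
    atomCoord a c = r := by
  simp only [atomCoord, h, smul_le_smul_iff_of_pos_right ha]
  exact csSup_Iic

theorem mul_eq_atomCoord_smul (hbd : IsBounded C) (harch : IsArch C) (hdc : DedekindComplete C)
    {a : C} (ha : IsIdemAtom a) (c : C) : c * a = atomCoord a c • a := by
  set L := {r : ℝ | r • a ≤ c * a}
  have ha0 : 0 < a := ha.pos hbd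
  have hsmall : ∀ ε : ℝ, 0 < ε → ε • a ≤ ε • (1 : C) := fun ε hε =>
    smul_le_smul_of_nonneg_left (ha.le_one hbd) hε.le
  have hmul : ∀ {k : ℕ} {x : C}, x ≤ k • 1 → x * a ≤ (k : ℝ) • a := fun h => by
    simpa [Nat.cast_smul_eq_nsmul] using mul_le_mul_of_nonneg_right h ha0.le
  obtain ⟨n, hn⟩ := hbd c
  obtain ⟨m, hm⟩ := hbd (-c)
  have hne : L.Nonempty := ⟨-m, by
    show (-(m : ℝ)) • a ≤ c * a
    rw [neg_smul]
    exact neg_le.1 (by simpa using hmul hm)⟩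
  have hbdd : BddAbove L := ⟨n, fun q hq => le_of_smul_le_smul_right (hq.trans (hmul hn)) ha0⟩
  have htotal : ∀ q : ℝ, q ∉ L → c * a ≤ q • a := fun q hq => by
    have hw : (c * a - q • a) * a = c * a - q • a := by
      rw [sub_mul, mul_assoc, ha.1, smul_mul_assoc, ha.1]
    rcases ha.nonneg_or_nonpos hbd harch hdc hw with h | h
    · exact absurd (sub_nonneg.1 h) hq
    · exact sub_nonpos.1 h
  refine le_antisymm (sub_nonpos.1 (le_zero_of_forall_le_smul_one harch fun ε hε => ?_))
    (sub_nonpos.1 (le_zero_of_forall_le_smul_one harch fun ε hε => ?_))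
  · have hout : atomCoord a c + ε ∉ L := fun h =>
      (le_csSup hbdd h).not_gt (lt_add_of_pos_right _ hε)
    refine le_trans ?_ (hsmall ε hε)
    rw [sub_le_iff_le_add', ← add_smul]
    exact htotal _ hout
  · obtain ⟨q, hq, hlt⟩ := exists_lt_of_lt_csSup hne (sub_lt_self (atomCoord a c) hε)
    refine le_trans ?_ (hsmall ε hε)
    rw [sub_le_comm, ← sub_smul]
    exact (smul_le_smul_of_nonneg_right hlt.le ha0.le).trans hq

noncomputable def atomCoordHom (hbd : IsBounded C) (harch : IsArch C) (hdc : DedekindComplete C)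
    {a : C} (ha : IsIdemAtom a) : C →ₐ[ℝ] ℝ where
  toFun := atomCoord a
  map_one' := atomCoord_eq_of_mul_eq (ha.pos hbd) (by rw [one_mul, one_smul])
  map_mul' c c' := atomCoord_eq_of_mul_eq (ha.pos hbd) (by
    rw [mul_assoc, mul_eq_atomCoord_smul hbd harch hdc ha c', mul_smul_comm,
      mul_eq_atomCoord_smul hbd harch hdc ha c, smul_smul, mul_comm])
  map_zero' := atomCoord_eq_of_mul_eq (ha.pos hbd) (by rw [zero_mul, zero_smul])
  map_add' c c' := atomCoord_eq_of_mul_eq (ha.pos hbd) (by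
    rw [add_mul, mul_eq_atomCoord_smul hbd harch hdc ha c,
      mul_eq_atomCoord_smul hbd harch hdc ha c', add_smul])
  commutes' r := atomCoord_eq_of_mul_eq (ha.pos hbd) (by
    rw [Algebra.algebraMap_eq_smul_one, smul_mul_assoc, one_mul]; rfl)

theorem atomCoordHom_apply (hbd : IsBounded C) (harch : IsArch C) (hdc : DedekindComplete C)
    {a : C} (ha : IsIdemAtom a) (c : C) : atomCoordHom hbd harch hdc ha c = atomCoord a c :=
  rfl

theorem atomCoord_mono (hbd : IsBounded C) (harch : IsArch C) (hdc : DedekindComplete C)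
    {a : C} (ha : IsIdemAtom a) : Monotone (atomCoord a) := fun c c' h => by
  refine le_of_smul_le_smul_right ?_ (ha.pos hbd)
  rw [← mul_eq_atomCoord_smul hbd harch hdc ha, ← mul_eq_atomCoord_smul hbd harch hdc ha]
  exact mul_le_mul_of_nonneg_right h (ha.pos hbd).le

theorem isBalHom_of_monotone (hbd : IsBounded C) (ψ : C →ₐ[ℝ] ℝ) (hψ : Monotone ψ) :
    IsBalHom ψ := by
  have hpos : ∀ c : C, ψ c⁺ = (ψ c)⁺ := by
    intro c
    have hcross : ψ c⁺ * ψ c⁻ = 0 := by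
      rw [← map_mul, mul_eq_zero_of_inf_eq_zero hbd (posPart_nonneg c) (negPart_nonneg c)
        (posPart_inf_negPart_eq_zero c), map_zero]
    have hsub : ψ c⁺ - ψ c⁻ = ψ c := by rw [← map_sub, posPart_sub_negPart]
    have hp : 0 ≤ ψ c⁺ := map_zero ψ ▸ hψ (posPart_nonneg c)
    have hn : 0 ≤ ψ c⁻ := map_zero ψ ▸ hψ (negPart_nonneg c)
    rcases mul_eq_zero.1 hcross with h | h
    · rw [h, eq_comm, posPart_eq_zero]
      linarith
    · rw [← hsub, h, sub_zero, posPart_eq_self.2 hp]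
  intro c c'
  rw [sup_eq_add_posPart_sub, map_add, hpos, map_sub, ← sup_eq_add_posPart_sub]

theorem isBalHom_atomCoordHom (hbd : IsBounded C) (harch : IsArch C) (hdc : DedekindComplete C)
    {a : C} (ha : IsIdemAtom a) : IsBalHom (atomCoordHom hbd harch hdc ha) :=
  isBalHom_of_monotone hbd _ (atomCoord_mono hbd harch hdc ha)

theorem atomCoord_isLUB (hbd : IsBounded C) (harch : IsArch C) (hdc : DedekindComplete C)
    {a : C} (ha : IsIdemAtom a) {S : Set C} {u : C} (hu : IsLUB S u) :
    IsLUB (atomCoord a '' S) (atomCoord a u) := by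
  set ψ := atomCoordHom hbd harch hdc ha
  have ha0 : 0 < a := ha.pos hbd
  refine ⟨(atomCoord_mono hbd harch hdc ha).mem_upperBounds_image hu.1, fun w hw => ?_⟩
  by_contra! hlt
  set δ := atomCoord a u - w
  -- Otherwise `u - δ • a` would be a smaller upper bound of `S`.
  have hub : u ≤ u - δ • a := hu.2 fun s hs => by
    have hδ : δ ≤ ψ (u - s) := by
      simp only [map_sub, ψ, atomCoordHom_apply]
      linarith [hw ⟨s, hs, rfl⟩]
    rw [le_sub_comm]
    calc δ • a ≤ ψ (u - s) • a := smul_le_smul_of_nonneg_right hδ ha0.le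
      _ = (u - s) * a := (mul_eq_atomCoord_smul hbd harch hdc ha _).symm
      _ ≤ u - s := by
        simpa using mul_le_mul_of_nonneg_left (ha.le_one hbd)
          (sub_nonneg.2 (hu.1 hs))
  exact (smul_pos (sub_pos.2 hlt) ha0).not_ge (by simpa using hub)

theorem eq_zero_of_forall_mul_atom_eq_zero (hbd : IsBounded C) (harch : IsArch C)
    (hdc : DedekindComplete C) (hat : IdemAtomic C) {c : C} (hc : 0 ≤ c)
    (h : ∀ a : C, IsIdemAtom a → c * a = 0) : c = 0 := by
  obtain ⟨e, he, hce, perp⟩ := exists_support_idempotent hbd harch hdc hc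
  by_contra hne
  obtain ⟨a, ha, hae⟩ := hat e he fun he0 => hne (by rw [← hce, he0, mul_zero])
  have hac : a ⊓ c = 0 := by
    rw [inf_comm]
    exact inf_eq_zero_of_mul_eq_zero hbd harch hc (ha.pos hbd).le (h a ha)
  exact ha.2.1 (by rw [← hae, perp a (ha.pos hbd).le hac])

theorem le_of_forall_atomCoord_le (hbd : IsBounded C) (harch : IsArch C)
    (hdc : DedekindComplete C) (hat : IdemAtomic C) {c c' : C}
    (h : ∀ a : C, IsIdemAtom a → atomCoord a c ≤ atomCoord a c') : c ≤ c' := by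
  rw [← sub_nonpos, ← posPart_eq_zero]
  refine eq_zero_of_forall_mul_atom_eq_zero hbd harch hdc hat (posPart_nonneg _) fun a ha => ?_
  have hcoord : atomCoordHom hbd harch hdc ha (c - c')⁺ = 0 := by
    rw [posPart_def, isBalHom_atomCoordHom hbd harch hdc ha, map_zero, map_sub, sup_eq_right,
      sub_nonpos]
    exact h a ha
  rw [mul_eq_atomCoord_smul hbd harch hdc ha, ← atomCoordHom_apply hbd harch hdc ha, hcoord,
    zero_smul]

abbrev IdemAtoms (C : Type*) [LAlg C] : Type _ := {a : C // IsIdemAtom a}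

theorem atomCoord_self (hbd : IsBounded C) {a : C} (ha : IsIdemAtom a) : atomCoord a a = 1 :=
  atomCoord_eq_of_mul_eq (ha.pos hbd) (by rw [ha.1, one_smul])

theorem atomCoord_eq_zero_of_ne (hbd : IsBounded C) {a b : C} (ha : IsIdemAtom a)
    (hb : IsIdemAtom b) (hab : a ≠ b) : atomCoord b a = 0 :=
  atomCoord_eq_of_mul_eq (hb.pos hbd) (by rw [ha.mul_eq_zero_of_ne hb hab, zero_smul])

theorem exists_atomCoord_eq (hbd : IsBounded C) (harch : IsArch C) (hdc : DedekindComplete C)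
    (f : IdemAtoms C → ℝ) (r : ℝ) (hr : ∀ x, |f x| ≤ r) :
    ∃ c : C, ∀ x : IdemAtoms C, atomCoord x.1 c = f x := by
  set R := |r|
  have hR : 0 ≤ R := abs_nonneg r
  have hfR : ∀ x, -R ≤ f x ∧ f x ≤ R := fun x => abs_le.1 ((hr x).trans (le_abs_self r))
  -- `c` is the supremum of the elements equal to `f z` on the atom `z` and to `-R` elsewhere.
  let g : IdemAtoms C → C := fun z => f z • z.1 + (-R) • (1 - z.1)
  let T : Set C := insert ((-R) • 1) (Set.range g)
  have hTbdd : BddAbove T := by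
    refine ⟨R • 1, ?_⟩
    rintro _ (rfl | ⟨z, rfl⟩)
    · exact smul_le_smul_of_nonneg_right (neg_le_self hR) (LAlg.zero_le_one hbd)
    · calc g z ≤ R • z.1 + R • (1 - z.1) := add_le_add
            (smul_le_smul_of_nonneg_right (hfR z).2 (z.2.pos hbd).le)
            (smul_le_smul_of_nonneg_right (neg_le_self hR) (sub_nonneg.2 (z.2.le_one hbd)))
        _ = R • 1 := by rw [← smul_add, add_sub_cancel]
  obtain ⟨c, hc⟩ := hdc T (Set.insert_nonempty _ _) hTbdd
  refine ⟨c, fun x => ?_⟩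
  have hg : ∀ z, atomCoord x.1 (g z) =
      f z * atomCoord x.1 z.1 + -R * (1 - atomCoord x.1 z.1) := fun z => by
    simp only [g, ← atomCoordHom_apply hbd harch hdc x.2, map_add, map_smul, map_sub, map_one,
      smul_eq_mul]
  have hfx : IsLUB (atomCoord x.1 '' T) (f x) := by
    refine IsGreatest.isLUB ⟨⟨g x, Set.mem_insert_of_mem _ ⟨x, rfl⟩, ?_⟩, ?_⟩
    · simp [hg, atomCoord_self hbd x.2]
    rintro _ ⟨_, rfl | ⟨z, rfl⟩, rfl⟩
    · rw [← atomCoordHom_apply hbd harch hdc x.2, map_smul, map_one, smul_eq_mul, mul_one]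
      exact (hfR x).1
    · rcases eq_or_ne z x with rfl | hzx
      · simp [hg, atomCoord_self hbd z.2]
      · simpa [hg, atomCoord_eq_zero_of_ne hbd z.2 x.2 (Subtype.coe_ne_coe.2 hzx)]
          using (hfR x).1
  exact (atomCoord_isLUB hbd harch hdc x.2 hc).unique hfx

theorem atomCoord_mem_bddFuns (hbd : IsBounded C) (harch : IsArch C) (hdc : DedekindComplete C)
    (c : C) : (fun x : IdemAtoms C => atomCoord x.1 c) ∈ BddFuns (IdemAtoms C) := by
  have hle : ∀ (x : IdemAtoms C) (d : C) (n : ℕ), d ≤ n • 1 → atomCoord x.1 d ≤ n := by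
    intro x d n hd
    have h := atomCoord_mono hbd harch hdc x.2 hd
    rwa [← atomCoordHom_apply hbd harch hdc x.2 (n • 1), map_nsmul, map_one, nsmul_one] at h
  obtain ⟨n, hn⟩ := hbd c
  obtain ⟨m, hm⟩ := hbd (-c)
  refine ⟨max n m, fun x => abs_le.2 ⟨?_, (hle x c n hn).trans (le_max_left _ _)⟩⟩
  have := hle x (-c) m hm
  rw [← atomCoordHom_apply hbd harch hdc x.2, map_neg, atomCoordHom_apply] at this
  linarith [le_max_right (n : ℝ) m]

noncomputable def coordEquiv (hC : IsBasic C) : C ≃ₐ[ℝ] BddFuns (IdemAtoms C) :=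
  AlgEquiv.ofBijective
    ((AlgHom.pi fun x : IdemAtoms C => atomCoordHom hC.1 hC.2.1 hC.2.2.1 x.2).codRestrict _
      (atomCoord_mem_bddFuns hC.1 hC.2.1 hC.2.2.1))
    ⟨fun c c' h => le_antisymm
      (le_of_forall_atomCoord_le hC.1 hC.2.1 hC.2.2.1 hC.2.2.2 fun a ha =>
        (congrFun (congrArg Subtype.val h) ⟨a, ha⟩).le)
      (le_of_forall_atomCoord_le hC.1 hC.2.1 hC.2.2.1 hC.2.2.2 fun a ha =>
        (congrFun (congrArg Subtype.val h) ⟨a, ha⟩).ge),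
     fun g => by
      obtain ⟨r, hr⟩ := g.2
      obtain ⟨c, hc⟩ := exists_atomCoord_eq hC.1 hC.2.1 hC.2.2.1 g.1 r hr
      exact ⟨c, Subtype.ext (funext hc)⟩⟩

theorem coordEquiv_le_iff (hC : IsBasic C) {c c' : C} :
    coordEquiv hC c ≤ coordEquiv hC c' ↔ c ≤ c' :=
  ⟨fun h => le_of_forall_atomCoord_le hC.1 hC.2.1 hC.2.2.1 hC.2.2.2 fun a ha => h ⟨a, ha⟩,
    fun h x => atomCoord_mono hC.1 hC.2.1 hC.2.2.1 x.2 h⟩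

end LAlg

section Normal

variable {A B D : Type*} [LAlg A] [LAlg B] [LAlg D]

theorem IsBalHom.comp {f : B →ₐ[ℝ] D} {g : A →ₐ[ℝ] B} (hf : IsBalHom f) (hg : IsBalHom g) :
    IsBalHom (f.comp g) := fun a b => by
  rw [AlgHom.comp_apply, hg, hf]
  rfl

theorem IsNormal.comp {f : B →ₐ[ℝ] D} {g : A →ₐ[ℝ] B} (hf : IsNormal f) (hg : IsNormal g) :
    IsNormal (f.comp g) :=
  ⟨hf.1.comp hg.1,
    fun S a ha => by rw [AlgHom.coe_comp, Set.image_comp]; exact hf.2.1 _ _ (hg.2.1 S a ha),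
    fun S a ha => by rw [AlgHom.coe_comp, Set.image_comp]; exact hf.2.2 _ _ (hg.2.2 S a ha)⟩

theorem isNormal_of_isLUB {γ : A →ₐ[ℝ] B} (hbal : IsBalHom γ)
    (hlub : ∀ (S : Set A) (a : A), IsLUB S a → IsLUB (γ '' S) (γ a)) : IsNormal γ := by
  refine ⟨hbal, hlub, fun S a ha => ?_⟩
  rw [← isLUB_neg', ← Set.image_neg, ← map_neg]
  exact hlub _ _ (isLUB_neg'.2 ha)

theorem AlgEquiv.isNormal_symm_of_le_iff (γ : A ≃ₐ[ℝ] B) (h : ∀ {a b : A}, γ a ≤ γ b ↔ a ≤ b) :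
    IsNormal (γ.symm : B →ₐ[ℝ] A) :=
  let o : B ≃o A := ({ toEquiv := γ.toEquiv, map_rel_iff' := h } : A ≃o B).symm
  ⟨fun a b => o.map_sup a b, fun _ _ ha => o.isLUB_image'.2 ha, fun _ _ ha => o.isGLB_image'.2 ha⟩

end Normal

namespace BddFuns

variable {X Y : Type*}

theorem isLUB_of_forall_isLUB_apply {S : Set (BddFuns Y)} {u : BddFuns Y}
    (h : ∀ y, IsLUB ((fun g : BddFuns Y => (g : Y → ℝ) y) '' S) ((u : Y → ℝ) y)) : IsLUB S u :=
  ⟨fun g hg y => (h y).1 ⟨g, hg, rfl⟩,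
    fun w hw y => (h y).2 (by rintro _ ⟨g, hg, rfl⟩; exact hw hg y)⟩

theorem exists_forall_isLUB_apply {S : Set (BddFuns Y)} (hne : S.Nonempty) (hbdd : BddAbove S) :
    ∃ u : BddFuns Y, ∀ y, IsLUB ((fun g : BddFuns Y => (g : Y → ℝ) y) '' S) ((u : Y → ℝ) y) := by
  obtain ⟨g₀, hg₀⟩ := hne
  obtain ⟨v, hv⟩ := hbdd
  have hne' : ∀ y, ((fun g : BddFuns Y => (g : Y → ℝ) y) '' S).Nonempty :=
    fun y => ⟨_, g₀, hg₀, rfl⟩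
  have hbdd' : ∀ y, (v : Y → ℝ) y ∈ upperBounds ((fun g : BddFuns Y => (g : Y → ℝ) y) '' S) := by
    rintro y _ ⟨g, hg, rfl⟩
    exact hv hg y
  obtain ⟨r, hr⟩ := g₀.2
  obtain ⟨s, hs⟩ := v.2
  refine ⟨⟨fun y => sSup ((fun g : BddFuns Y => (g : Y → ℝ) y) '' S), max r s, fun y => ?_⟩,
    fun y => isLUB_csSup (hne' y) ⟨_, hbdd' y⟩⟩
  have h₀ := le_csSup ⟨_, hbdd' y⟩ ⟨g₀, hg₀, rfl⟩
  have h₁ := csSup_le (hne' y) (hbdd' y)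
  have := abs_le.1 (hr y)
  have := abs_le.1 (hs y)
  exact abs_le.2 ⟨by linarith [le_max_left r s], by linarith [le_max_right r s]⟩

theorem isLUB_apply {S : Set (BddFuns Y)} {u : BddFuns Y} (hu : IsLUB S u) (y : Y) :
    IsLUB ((fun g : BddFuns Y => (g : Y → ℝ) y) '' S) ((u : Y → ℝ) y) := by
  rcases S.eq_empty_or_nonempty with rfl | hne
  · have : (u : Y → ℝ) y ≤ (u : Y → ℝ) y - 1 := hu.2 (fun _ h => h.elim : u - 1 ∈ upperBounds ∅) y
    linarith
  obtain ⟨v, hv⟩ := exists_forall_isLUB_apply hne ⟨u, hu.1⟩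
  rw [hu.unique (isLUB_of_forall_isLUB_apply hv)]
  exact hv y

theorem dedekindComplete : DedekindComplete (BddFuns Y) := fun _ hne hbdd =>
  (exists_forall_isLUB_apply hne hbdd).imp fun _ => isLUB_of_forall_isLUB_apply

theorem isBounded : LAlg.IsBounded (BddFuns Y) := by
  rintro ⟨g, r, hr⟩
  refine ⟨⌈r⌉₊, fun y => ?_⟩
  change g y ≤ ⌈r⌉₊ • (1 : ℝ)
  rw [nsmul_one]
  exact (le_abs_self _).trans ((hr y).trans (Nat.le_ceil r))

theorem isArch : LAlg.IsArch (BddFuns Y) := by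
  rintro g ⟨h, r, hr⟩ hgh y
  by_contra! hy
  obtain ⟨n, hn⟩ := exists_nat_gt (r / (g : Y → ℝ) y)
  have hn' : n • (g : Y → ℝ) y ≤ h y := hgh n y
  rw [div_lt_iff₀ hy, ← nsmul_eq_mul] at hn
  linarith [le_abs_self (h y), hr y]

noncomputable def single (y : Y) : BddFuns Y :=
  ⟨({y} : Set Y).indicator 1, 1, fun y' => by
    classical
    rw [Set.indicator_apply]
    split_ifs <;> simp⟩

theorem single_apply_self (y : Y) : (single y : Y → ℝ) y = 1 := by
  simp [single]

theorem mul_single (g : BddFuns Y) (y : Y) : g * single y = (g : Y → ℝ) y • single y := by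
  ext y'
  rcases eq_or_ne y' y with rfl | hy
  · rfl
  · simp [single, hy]

theorem isIdempotentElem_single (y : Y) : IsIdempotentElem (single y) := by
  rw [IsIdempotentElem, mul_single, single_apply_self, one_smul]

theorem apply_eq_zero_or_one {e : BddFuns Y} (he : IsIdempotentElem e) (y : Y) :
    (e : Y → ℝ) y = 0 ∨ (e : Y → ℝ) y = 1 :=
  IsIdempotentElem.iff_eq_zero_or_one.1 (congrFun (congrArg Subtype.val he.eq) y)

theorem isIdemAtom_single (y : Y) : IsIdemAtom (single y) := by
  have hne : single y ≠ 0 := fun h => by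
    simpa [single_apply_self] using congrFun (congrArg Subtype.val h) y
  refine ⟨isIdempotentElem_single y, hne, fun f hf hfy => ?_⟩
  rw [← hfy, mul_single]
  rcases apply_eq_zero_or_one hf y with h | h <;> simp [h]

theorem idemAtomic : IdemAtomic (BddFuns Y) := by
  intro e he hne
  obtain ⟨y, hy⟩ : ∃ y, (e : Y → ℝ) y = 1 := by
    by_contra! h
    exact hne (Subtype.ext (funext fun y => (apply_eq_zero_or_one he y).resolve_right (h y)))
  exact ⟨single y, isIdemAtom_single y, by rw [mul_comm, mul_single, hy, one_smul]⟩

theorem isBasic : IsBasic (BddFuns Y) :=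
  ⟨isBounded, isArch, dedekindComplete, idemAtomic⟩

theorem isLUB_range_single : IsLUB (Set.range (single (Y := Y))) 1 := by
  classical
  refine ⟨?_, fun w hw y => by simpa [single_apply_self] using hw ⟨y, rfl⟩ y⟩
  rintro _ ⟨y, rfl⟩ y'
  change ({y} : Set Y).indicator 1 y' ≤ 1
  rw [Set.indicator_apply]
  split_ifs <;> simp

theorem exists_eq_eval (ψ : BddFuns Y →ₐ[ℝ] ℝ)
    (hψ : ∀ (S : Set (BddFuns Y)) (u : BddFuns Y), IsLUB S u → IsLUB (ψ '' S) (ψ u)) :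
    ∃ y, ∀ g : BddFuns Y, ψ g = (g : Y → ℝ) y := by
  obtain ⟨y, hy⟩ : ∃ y, ψ (single y) = 1 := by
    by_contra! h
    have hub : (0 : ℝ) ∈ upperBounds (ψ '' Set.range single) := by
      rintro _ ⟨_, ⟨y, rfl⟩, rfl⟩
      have := IsIdempotentElem.iff_eq_zero_or_one.1 ((isIdempotentElem_single y).map ψ)
      exact (this.resolve_right (h y)).le
    have := (hψ _ _ isLUB_range_single).2 hub
    rw [map_one] at this
    exact one_pos.not_ge this
  refine ⟨y, fun g => ?_⟩
  calc ψ g = ψ (g * single y) := by rw [map_mul, hy, mul_one]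
    _ = (g : Y → ℝ) y := by rw [mul_single, map_smul, hy, smul_eq_mul, mul_one]

noncomputable def comap (φ : X → Y) : BddFuns Y →ₐ[ℝ] BddFuns X :=
  ((AlgHom.pi fun x => Pi.evalAlgHom ℝ (fun _ : Y => ℝ) (φ x)).comp (BddFuns Y).val).codRestrict _
    fun g => by
      obtain ⟨r, hr⟩ := g.2
      exact ⟨r, fun x => hr (φ x)⟩

theorem isNormal_comap (φ : X → Y) : IsNormal (comap φ) := by
  refine isNormal_of_isLUB (fun g g' => rfl) fun S u hu => isLUB_of_forall_isLUB_apply fun x => ?_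
  rw [← Set.image_comp]
  exact isLUB_apply hu (φ x)

end BddFuns

section Reflection

open LAlg

variable {A : Type} {C : Type*} [LAlg A] [LAlg C]

noncomputable def atomPoint (hbd : IsBounded C) (harch : IsArch C) (hdc : DedekindComplete C)
    {α : A →ₐ[ℝ] C} (hα : IsBalHom α) (x : IdemAtoms C) : YosidaSpace A :=
  ⟨(atomCoordHom hbd harch hdc x.2).comp α, (isBalHom_atomCoordHom hbd harch hdc x.2).comp hα⟩

theorem coordEquiv_comp_eq_comap (hb : IsBounded A) (hC : IsBasic C) {α : A →ₐ[ℝ] C}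
    (hα : IsBalHom α) {γ : BddFuns (YosidaSpace A) →ₐ[ℝ] C}
    (hγ : ∀ (S : Set (BddFuns (YosidaSpace A))) (u : BddFuns (YosidaSpace A)),
      IsLUB S u → IsLUB (γ '' S) (γ u))
    (he : ∀ a : A, γ (eMap A hb a) = α a) :
    (coordEquiv hC : C →ₐ[ℝ] BddFuns (IdemAtoms C)).comp γ =
      BddFuns.comap (atomPoint hC.1 hC.2.1 hC.2.2.1 hα) := by
  obtain ⟨hbd, harch, hdc, -⟩ := hC
  ext g x
  set ψ := (atomCoordHom hbd harch hdc x.2).comp γ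
  obtain ⟨y, hy⟩ := BddFuns.exists_eq_eval ψ fun S u hu => by
    rw [AlgHom.coe_comp, Set.image_comp]
    exact atomCoord_isLUB hbd harch hdc x.2 (hγ S u hu)
  -- Testing `ψ` on `eMap A hb a` identifies the point `y`.
  have hyx : y = atomPoint hbd harch hdc hα x := Subtype.ext <| AlgHom.ext fun a => by
    have := hy (eMap A hb a)
    rw [AlgHom.comp_apply, he] at this
    exact this.symm
  exact (hy g).trans (congrArg _ hyx)

end Reflection

theorem stmt15_general (A : Type) [LAlg A] (hb : LAlg.IsBounded A) :
    IsBasic (BddFuns (YosidaSpace A)) ∧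
    ∀ (C : Type) [LAlg C], IsBasic C →
      ∀ α : A →ₐ[ℝ] C, IsBalHom α →
        ∃! γ : BddFuns (YosidaSpace A) →ₐ[ℝ] C,
          IsNormal γ ∧ ∀ a : A, γ (eMap A hb a) = α a := by
  refine ⟨BddFuns.isBasic, fun C _ hC α hα => ?_⟩
  set Φ := LAlg.coordEquiv hC
  set φ := atomPoint hC.1 hC.2.1 hC.2.2.1 hα
  have hΦ : IsNormal (Φ.symm : BddFuns (LAlg.IdemAtoms C) →ₐ[ℝ] C) :=
    Φ.isNormal_symm_of_le_iff (LAlg.coordEquiv_le_iff hC)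
  refine ⟨(Φ.symm : BddFuns (LAlg.IdemAtoms C) →ₐ[ℝ] C).comp (BddFuns.comap φ),
    ⟨hΦ.comp (BddFuns.isNormal_comap φ), fun a => Φ.injective ?_⟩, fun γ hγ => ?_⟩
  · change Φ (Φ.symm _) = _
    -- Both sides are `x ↦ atomCoord x (α a)`.
    rw [AlgEquiv.apply_symm_apply]
    rfl
  · rw [← coordEquiv_comp_eq_comap hb hC hα hγ.1.2.1 hγ.2]
    exact AlgHom.ext fun g => (Φ.symm_apply_apply (γ g)).symm

/-- B(Y_A) is a basic algebra and e : A → B(Y_A) has the universal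
property of the reflection of A into basic algebras: every bal-morphism from A to a
basic algebra C factors uniquely through e via a normal homomorphism.  Hence the
basic algebras form a (non-full) reflective subcategory of bal, with reflector the
canonical extension A ↦ B(Y_A). -/
theorem stmt15 (A : Type) [LAlg A] (hb : LAlg.IsBounded A) (ha : LAlg.IsArch A) :
    IsBasic (BddFuns (YosidaSpace A)) ∧
    ∀ (C : Type) [LAlg C], IsBasic C →
      ∀ α : A →ₐ[ℝ] C, IsBalHom α →
        ∃! γ : BddFuns (YosidaSpace A) →ₐ[ℝ] C,
          IsNormal γ ∧ ∀ a : A, γ (eMap A hb a) = α a :=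
  stmt15_general A hb
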